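/- Let S be a species tree on n ≥ 2 leaves and let α ∈ [0,1]. Then the diameter of PLR over 𝖦^S satisfies diam(PLR, S) = 2α·H(S) + (1−α)(2n−2); that is, PLR(𝒢₁, 𝒢₂) ≤ 2α·H(S) + (1−α)(2n−2) for all 𝒢₁, 𝒢₂ ∈ 𝖦^S, and there exist 𝒢₁, 𝒢₂ ∈ 𝖦^S attaining this value. -/

import Mathlib

open SimpleGraph

attribute [local instance] Classical.propDecidable

/-- A rooted tree: a finite connected acyclic graph with a distinguished root. -/
structure RTree (V : Type*) [Fintype V] where
  adj : SimpleGraph V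
  isTree : adj.IsTree
  root : V

variable {V : Type*} [Fintype V]

/-- `Anc T a b` : `a` is an ancestor of `b` (i.e. `b ⪯ a`), expressed as:
`a` lies on the (unique) path from the root to `b`. -/
def Anc (T : RTree V) (a b : V) : Prop :=
  T.adj.dist T.root b = T.adj.dist T.root a + T.adj.dist a b

/-- `IsChild T c p` : `c` is a child of `p`. -/
def IsChild (T : RTree V) (c p : V) : Prop :=
  T.adj.Adj c p ∧ Anc T p c

/-- The set of children of `v`. -/
def childSet (T : RTree V) (v : V) : Set V := {c | IsChild T c v}

/-- A leaf is a node with no children. -/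
def IsLeaf (T : RTree V) (v : V) : Prop := ∀ c, ¬ IsChild T c v

/-- The clade of `v`: the set of leaves descending from `v`. -/
def clade (T : RTree V) (v : V) : Set V := {x | IsLeaf T x ∧ Anc T v x}

/-- `w` is the lowest common ancestor of the set `X` in `T`. -/
def IsLCA (T : RTree V) (X : Set V) (w : V) : Prop :=
  (∀ x ∈ X, Anc T w x) ∧ ∀ w', (∀ x ∈ X, Anc T w' x) → Anc T w' w

/-- A species tree is a rooted binary tree: every internal node has exactly two children. -/
def IsSpeciesTree (S : RTree V) : Prop :=
  ∀ v, ¬ IsLeaf S v → (childSet S v).ncard = 2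

/-- Number of leaves of a rooted tree. -/
noncomputable def numLeaves (T : RTree V) : ℕ := {v | IsLeaf T v}.ncard

/-- `Hsum S` = `H(S)`: the sum of root-to-internal-node distances in `S`. -/
noncomputable def Hsum (S : RTree V) : ℕ :=
  ∑ v : V, if IsLeaf S v then 0 else S.adj.dist S.root v

inductive Evt | dup | spec | extant
deriving DecidableEq

/-- A reconciled gene tree with species tree `S`, whose leaves are labeled bijectively by
the set of genes `Γ`. -/
structure Recon (Γ : Type*) (VG : Type*) (VS : Type*) [Fintype VG] [Fintype VS]
    (S : RTree VS) where
  tree : RTree VG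
  geneLeaf : Γ → VG
  geneLeaf_inj : Function.Injective geneLeaf
  geneLeaf_range : ∀ v, IsLeaf tree v ↔ ∃ g, geneLeaf g = v
  μ : VG → VS
  lbl : VG → Evt
  internal_children : ∀ v, ¬ IsLeaf tree v → 2 ≤ (childSet tree v).ncard
  leaf_species : ∀ v, IsLeaf tree v → IsLeaf S (μ v)
  leaf_lbl : ∀ v, IsLeaf tree v → lbl v = Evt.extant
  internal_lbl : ∀ v, ¬ IsLeaf tree v → lbl v = Evt.dup ∨ lbl v = Evt.spec
  time_consistent : ∀ a b, Anc tree a b → Anc S (μ a) (μ b)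
  spec_two_children : ∀ v, lbl v = Evt.spec →
    ¬ IsLeaf S (μ v) ∧ (childSet tree v).ncard = 2
  spec_separates : ∀ v, lbl v = Evt.spec →
    ∀ v₁ v₂, IsChild tree v₁ v → IsChild tree v₂ v → v₁ ≠ v₂ →
      ∃ s₁ s₂, IsChild S s₁ (μ v) ∧ IsChild S s₂ (μ v) ∧ s₁ ≠ s₂ ∧
        ((Anc S s₁ (μ v₁) ∧ Anc S s₂ (μ v₂)) ∨ (Anc S s₂ (μ v₁) ∧ Anc S s₁ (μ v₂)))

variable {Γ : Type*} {VS VG₁ VG₂ : Type*} [Fintype VS] [Fintype VG₁] [Fintype VG₂]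
  {S : RTree VS}

/-- The clade of a gene tree node, as a set of genes. -/
def gclade (𝒢 : Recon Γ VG₁ VS S) (v : VG₁) : Set Γ :=
  {g | Anc 𝒢.tree v (𝒢.geneLeaf g)}

/-- Two reconciled gene trees (over the same species tree and gene set) are comparable if
corresponding extant genes map to the same species. -/
def Comparable (𝒢₁ : Recon Γ VG₁ VS S) (𝒢₂ : Recon Γ VG₂ VS S) : Prop :=
  ∀ g, 𝒢₁.μ (𝒢₁.geneLeaf g) = 𝒢₂.μ (𝒢₂.geneLeaf g)

/-- `m` is the correspondence map `v ↦ lca_{G₂}(L(G₁(v)))`. -/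
def IsLcaMap (𝒢₁ : Recon Γ VG₁ VS S) (𝒢₂ : Recon Γ VG₂ VS S) (m : VG₁ → VG₂) : Prop :=
  ∀ v, IsLCA 𝒢₂.tree (𝒢₂.geneLeaf '' gclade 𝒢₁ v) (m v)

/-- `μ` is the lca-mapping: every node maps to the lca of the species of its leaf descendants. -/
def UsesLcaMapping (𝒢 : Recon Γ VG₁ VS S) : Prop :=
  ∀ v, IsLCA S (𝒢.μ '' clade 𝒢.tree v) (𝒢.μ v)

/-- The path component `d_path(𝒢₁,𝒢₂)` (with `m` the lca correspondence map). -/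
noncomputable def dPath (𝒢₁ : Recon Γ VG₁ VS S) (𝒢₂ : Recon Γ VG₂ VS S)
    (m : VG₁ → VG₂) : ℕ :=
  ∑ v : VG₁, S.adj.dist (𝒢₁.μ v) (𝒢₂.μ (m v))

/-- The label component `d_lbl(𝒢₁,𝒢₂)`. -/
noncomputable def dLbl (𝒢₁ : Recon Γ VG₁ VS S) (𝒢₂ : Recon Γ VG₂ VS S)
    (m : VG₁ → VG₂) : ℕ :=
  {v : VG₁ | 𝒢₁.lbl v ≠ 𝒢₂.lbl (m v)}.ncard

/-- The asymmetric dissimilarity `d_asym = α·d_path + (1−α)·d_lbl`. -/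
noncomputable def dAsym (α : ℝ) (𝒢₁ : Recon Γ VG₁ VS S) (𝒢₂ : Recon Γ VG₂ VS S)
    (m : VG₁ → VG₂) : ℝ :=
  α * (dPath 𝒢₁ 𝒢₂ m : ℝ) + (1 - α) * (dLbl 𝒢₁ 𝒢₂ m : ℝ)

/-- The Path-Label Reconciliation dissimilarity `PLR(𝒢₁,𝒢₂)`, where `m₁₂`, `m₂₁` are the
lca correspondence maps in the two directions. -/
noncomputable def PLR (α : ℝ) (𝒢₁ : Recon Γ VG₁ VS S) (𝒢₂ : Recon Γ VG₂ VS S)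
    (m₁₂ : VG₁ → VG₂) (m₂₁ : VG₂ → VG₁) : ℝ :=
  dAsym α 𝒢₁ 𝒢₂ m₁₂ + dAsym α 𝒢₂ 𝒢₁ m₂₁

/-- An edge `uv` (with `u` the parent of `v`) is redundant if both endpoints are duplications
mapped to the same species. -/
def RedundantEdge (𝒢 : Recon Γ VG₁ VS S) (u v : VG₁) : Prop :=
  IsChild 𝒢.tree v u ∧ 𝒢.μ u = 𝒢.μ v ∧ 𝒢.lbl u = Evt.dup ∧ 𝒢.lbl v = Evt.dup

/-- A reconciled gene tree is least duplication-resolved if it has no redundant edge. -/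
def LeastDupResolved (𝒢 : Recon Γ VG₁ VS S) : Prop :=
  ∀ u v, ¬ RedundantEdge 𝒢 u v

/-- `𝒢'` is obtained from `𝒢` by contracting the edge `uv` (`u` the parent of `v`), i.e.
deleting `v` and attaching its children to `u`; `φ` is the corresponding quotient map. -/
def IsContractionOf (𝒢 : Recon Γ VG₁ VS S) (u v : VG₁) (𝒢' : Recon Γ VG₂ VS S)
    (φ : VG₁ → VG₂) : Prop :=
  Function.Surjective φ ∧
  φ u = φ v ∧
  (∀ a b, φ a = φ b → a = b ∨ (a = u ∧ b = v) ∨ (a = v ∧ b = u)) ∧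
  (∀ x y, 𝒢'.tree.adj.Adj x y ↔
    ∃ a b, φ a = x ∧ φ b = y ∧ 𝒢.tree.adj.Adj a b ∧ ¬(a = u ∧ b = v) ∧ ¬(a = v ∧ b = u)) ∧
  𝒢'.tree.root = φ 𝒢.tree.root ∧
  (∀ g, 𝒢'.geneLeaf g = φ (𝒢.geneLeaf g)) ∧
  (∀ a, 𝒢'.μ (φ a) = 𝒢.μ a) ∧
  (∀ a, 𝒢'.lbl (φ a) = 𝒢.lbl a)

/-- Symmetrized redundancy relation on nodes. -/
def RedundantAdj (𝒢 : Recon Γ VG₁ VS S) (a b : VG₁) : Prop :=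
  RedundantEdge 𝒢 a b ∨ RedundantEdge 𝒢 b a

/-- `𝒢'` is the least duplication-resolved tree `LR(𝒢)` obtained by contracting every
redundant edge of `𝒢`; `φ` is the corresponding quotient map. -/
def IsLROf (𝒢 : Recon Γ VG₁ VS S) (𝒢' : Recon Γ VG₂ VS S) (φ : VG₁ → VG₂) : Prop :=
  Function.Surjective φ ∧
  (∀ a b, φ a = φ b ↔ Relation.EqvGen (RedundantAdj 𝒢) a b) ∧
  (∀ x y, 𝒢'.tree.adj.Adj x y ↔
    ∃ a b, φ a = x ∧ φ b = y ∧ 𝒢.tree.adj.Adj a b ∧ ¬ RedundantAdj 𝒢 a b) ∧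
  𝒢'.tree.root = φ 𝒢.tree.root ∧
  (∀ g, 𝒢'.geneLeaf g = φ (𝒢.geneLeaf g)) ∧
  (∀ a, 𝒢'.μ (φ a) = 𝒢.μ a) ∧
  (∀ a, 𝒢'.lbl (φ a) = 𝒢.lbl a)

/-- Isomorphism of reconciled gene trees: a leaf-fixing bijection preserving edges,
species maps and event labels. -/
def ReconIso (𝒢₁ : Recon Γ VG₁ VS S) (𝒢₂ : Recon Γ VG₂ VS S) : Prop :=
  ∃ φ : VG₁ ≃ VG₂,
    (∀ g, φ (𝒢₁.geneLeaf g) = 𝒢₂.geneLeaf g) ∧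
    (∀ a b, 𝒢₂.tree.adj.Adj (φ a) (φ b) ↔ 𝒢₁.tree.adj.Adj a b) ∧
    (∀ v, 𝒢₂.μ (φ v) = 𝒢₁.μ v) ∧
    (∀ v, 𝒢₂.lbl (φ v) = 𝒢₁.lbl v)

/-- Exactly one gene per species: the gene set is the set of species leaves, and each gene
resides in its own species. -/
def OneGenePerSpecies (𝒢 : Recon {s : VS // IsLeaf S s} VG₁ VS S) : Prop :=
  ∀ g, 𝒢.μ (𝒢.geneLeaf g) = g.1

/-!
For an internal node `v` of `G₁` let `x v` be the lca in `S` of the species below `v`. Both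
`μ₁ v` and `μ₂ (m v)` lie above `x v`, so the path term of `v` is at most the depth of `x v`.
Writing a depth as the number of strict ancestors and exchanging the sums, it suffices that for
every species node `w` the internal gene-tree nodes `v` with `x v` strictly below `w` are no more
than the internal nodes of `S` strictly below `w`. This follows from the forest bound (at most
`k - 1` internal gene-tree nodes have their clade inside a fixed set of `k` genes), applied below
each of the two children of `w`. The same bound allows at most `n - 1` label mismatches, since
leaves never mismatch. Equality holds for `S` labelled by speciations against `S` with every
internal node a duplication at the root of `S`.
-/

namespace RTree

variable {T : RTree V} {a b c u v w : V}

theorem length_eq_dist_of_isPath {p : T.adj.Walk u v} (hp : p.IsPath) :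
    p.length = T.adj.dist u v := by
  obtain ⟨q, hq, hlen⟩ := T.isTree.connected.exists_path_of_dist u v
  rw [← hlen, (T.isTree.existsUnique_path u v).unique hp hq]

theorem dist_add_dist_of_mem_support {p : T.adj.Walk u v} (hp : p.IsPath) (ha : a ∈ p.support) :
    T.adj.dist u a + T.adj.dist a v = T.adj.dist u v := by
  rw [← length_eq_dist_of_isPath (hp.takeUntil ha),
    ← length_eq_dist_of_isPath (hp.dropUntil ha), ← length_eq_dist_of_isPath hp,
    ← Walk.length_append, p.take_spec ha]

theorem anc_of_mem_support {p : T.adj.Walk T.root b} (hp : p.IsPath) (ha : a ∈ p.support) :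
    Anc T a b :=
  (dist_add_dist_of_mem_support hp ha).symm

theorem mem_support_of_anc {p : T.adj.Walk T.root b} (hp : p.IsPath) (h : Anc T a b) :
    a ∈ p.support := by
  obtain ⟨q₁, -, h₁⟩ := T.isTree.connected.exists_path_of_dist T.root a
  obtain ⟨q₂, -, h₂⟩ := T.isTree.connected.exists_path_of_dist a b
  have hq : (q₁.append q₂).IsPath :=
    (q₁.append q₂).isPath_of_length_eq_dist
      (by rw [Walk.length_append, h₁, h₂]; exact h.symm)
  rw [(T.isTree.existsUnique_path _ _).unique hp hq, Walk.mem_support_append_iff]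
  exact Or.inl q₁.end_mem_support

end RTree

open RTree

section Ancestry

variable {T : RTree V} {a b c p v w : V}

theorem Anc.refl (a : V) : Anc T a a := by
  simp [Anc]

theorem anc_root (b : V) : Anc T T.root b := by
  simp [Anc]

theorem Anc.trans (h₁ : Anc T a b) (h₂ : Anc T b c) : Anc T a c := by
  have := T.isTree.connected.dist_triangle (u := a) (v := b) (w := c)
  have := T.isTree.connected.dist_triangle (u := T.root) (v := a) (w := c)
  unfold Anc at *
  omega

theorem Anc.depth_le (h : Anc T a b) : T.adj.dist T.root a ≤ T.adj.dist T.root b := by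
  unfold Anc at h; omega

theorem Anc.eq_of_depth_le (h : Anc T a b) (hd : T.adj.dist T.root b ≤ T.adj.dist T.root a) :
    a = b :=
  T.isTree.connected.dist_eq_zero_iff.mp (by unfold Anc at h; omega)

theorem Anc.antisymm (h₁ : Anc T a b) (h₂ : Anc T b a) : a = b :=
  h₁.eq_of_depth_le h₂.depth_le

theorem Anc.total (ha : Anc T a c) (hb : Anc T b c) : Anc T a b ∨ Anc T b a := by
  obtain ⟨q, hq⟩ := (T.isTree.existsUnique_path T.root c).exists
  have hbq := mem_support_of_anc hq hb
  have haq : a ∈ ((q.takeUntil b hbq).append (q.dropUntil b hbq)).support := by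
    rw [q.take_spec hbq]; exact mem_support_of_anc hq ha
  rcases (Walk.mem_support_append_iff _ _).mp haq with h | h
  · exact Or.inl (anc_of_mem_support (hq.takeUntil hbq) h)
  · have := dist_add_dist_of_mem_support (hq.dropUntil hbq) h
    unfold Anc at *
    right; omega

theorem IsChild.depth_eq (h : IsChild T c p) :
    T.adj.dist T.root c = T.adj.dist T.root p + 1 := by
  rw [h.2, dist_eq_one_iff_adj.mpr h.1.symm]

theorem Anc.eq_of_depth_eq (ha : Anc T a c) (hb : Anc T b c)
    (hd : T.adj.dist T.root a = T.adj.dist T.root b) : a = b := by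
  rcases ha.total hb with h | h
  · exact h.eq_of_depth_le hd.ge
  · exact (h.eq_of_depth_le hd.le).symm

theorem IsChild.parent_unique {p' : V} (h : IsChild T c p) (h' : IsChild T c p') : p = p' :=
  h.2.eq_of_depth_eq h'.2 (by have := h.depth_eq; have := h'.depth_eq; omega)

theorem IsChild.eq_of_anc {c' x : V} (h : IsChild T c p) (h' : IsChild T c' p) (hx : Anc T c x)
    (hx' : Anc T c' x) : c = c' :=
  hx.eq_of_depth_eq hx' (by rw [h.depth_eq, h'.depth_eq])

theorem Anc.exists_child (h : Anc T v w) (hne : v ≠ w) : ∃ c, IsChild T c v ∧ Anc T c w := by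
  obtain ⟨q, hq⟩ := (T.isTree.existsUnique_path T.root w).exists
  have hvq := mem_support_of_anc hq h
  set r := q.dropUntil v hvq
  have hadj : T.adj.Adj v r.snd := Walk.adj_snd (Walk.not_nil_of_ne hne)
  have hcr : r.snd ∈ r.support := r.getVert_mem_support 1
  have hcw : Anc T r.snd w := anc_of_mem_support hq (q.support_dropUntil_subset_support hvq hcr)
  have hsplit := dist_add_dist_of_mem_support (hq.dropUntil hvq) hcr
  rw [dist_eq_one_iff_adj.mpr hadj] at hsplit
  refine ⟨r.snd, ⟨hadj.symm, ?_⟩, hcw⟩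
  unfold Anc at *
  rw [dist_eq_one_iff_adj.mpr hadj]
  omega

theorem exists_isChild_of_ne_root (hv : v ≠ T.root) : ∃ p, IsChild T v p := by
  obtain ⟨q, hq⟩ := (T.isTree.existsUnique_path T.root v).exists
  have hnil : ¬ q.Nil := Walk.not_nil_of_ne hv.symm
  exact ⟨q.penultimate, (Walk.adj_penultimate hnil).symm,
    anc_of_mem_support hq (q.getVert_mem_support _)⟩

theorem IsLeaf.eq_of_anc (hl : IsLeaf T a) (h : Anc T a b) : a = b := by
  by_contra hne
  obtain ⟨c, hc, -⟩ := h.exists_child hne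
  exact hl c hc

end Ancestry

section Counting

open Finset

variable {T : RTree V} {a b c v w x : V}

theorem exists_isLCA {X : Set V} (hX : X.Nonempty) : ∃ w, IsLCA T X w := by
  obtain ⟨w, hw, hmax⟩ := ({w | ∀ x ∈ X, Anc T w x} : Finset V).exists_max_image
    (T.adj.dist T.root ·) ⟨T.root, by simp [anc_root]⟩
  simp only [mem_filter, mem_univ, true_and] at hw hmax
  refine ⟨w, hw, fun w' hw' => ?_⟩
  obtain ⟨x, hx⟩ := hX
  rcases (hw' x hx).total (hw x hx) with h | h
  · exact h
  · rw [h.eq_of_depth_le (hmax w' hw')]; exact Anc.refl w'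

theorem IsLCA.unique {X : Set V} {w w' : V} (h : IsLCA T X w) (h' : IsLCA T X w') : w = w' :=
  (h'.2 w h.1).antisymm (h.2 w' h'.1)

theorem dist_le_depth_of_anc (ha : Anc T a c) (hb : Anc T b c) :
    T.adj.dist a b ≤ T.adj.dist T.root c := by
  rcases ha.total hb with h | h
  · unfold Anc at *; omega
  · rw [dist_comm]; unfold Anc at *; omega

theorem card_anc (b : V) : #{a | Anc T a b} = T.adj.dist T.root b + 1 := by
  obtain ⟨q, hq⟩ := (T.isTree.existsUnique_path T.root b).exists
  have hsupp : ({a | Anc T a b} : Finset V) = q.support.toFinset := by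
    ext a
    simp only [mem_filter, mem_univ, true_and, List.mem_toFinset]
    exact ⟨mem_support_of_anc hq, anc_of_mem_support hq⟩
  rw [hsupp, List.toFinset_card_of_nodup hq.support_nodup, Walk.length_support,
    length_eq_dist_of_isPath hq]

theorem card_strictAnc (b : V) : #{a | Anc T a b ∧ a ≠ b} = T.adj.dist T.root b := by
  have hsplit :
      ({a | Anc T a b ∧ a ≠ b} : Finset V) = ({a | Anc T a b} : Finset V).erase b := by
    ext; simp [and_comm]
  rw [hsplit, card_erase_of_mem (by simp [Anc.refl]), card_anc, Nat.add_sub_cancel]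

theorem sum_depth_eq_sum_card {α : Type*} (s : Finset α) (f : α → V) :
    ∑ a ∈ s, T.adj.dist T.root (f a) = ∑ w, #{a ∈ s | Anc T w (f a) ∧ w ≠ f a} := by
  simp_rw [← card_strictAnc]
  exact sum_card_bipartiteAbove_eq_sum_card_bipartiteBelow _

theorem clade_nonempty (T : RTree V) (v : V) : (clade T v).Nonempty := by
  obtain ⟨x, hx, hmax⟩ := ({x | Anc T v x} : Finset V).exists_max_image
    (T.adj.dist T.root ·) ⟨v, by simp [Anc.refl]⟩
  simp only [mem_filter, mem_univ, true_and] at hx hmax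
  refine ⟨x, fun c hc => ?_, hx⟩
  have := hmax c (hx.trans hc.2)
  have := hc.depth_eq
  omega

theorem clade_subset_of_anc (h : Anc T v w) : clade T w ⊆ clade T v :=
  fun _ hx => ⟨hx.1, h.trans hx.2⟩

theorem isLCA_clade (hT : ∀ v, ¬ IsLeaf T v → 2 ≤ (childSet T v).ncard) (v : V) :
    IsLCA T (clade T v) v := by
  refine ⟨fun x hx => hx.2, fun w hw => ?_⟩
  by_cases hl : IsLeaf T v
  · exact hw v ⟨hl, Anc.refl v⟩
  obtain ⟨c₁, hc₁, c₂, hc₂, hne⟩ := (Set.one_lt_ncard (Set.toFinite _)).mp (hT v hl)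
  obtain ⟨x₁, hx₁⟩ := clade_nonempty T c₁
  obtain ⟨x₂, hx₂⟩ := clade_nonempty T c₂
  have hwx₁ := hw x₁ (clade_subset_of_anc hc₁.2 hx₁)
  rcases hwx₁.total (hc₁.2.trans hx₁.2) with h | h
  · exact h
  by_contra hwv
  obtain ⟨c, hc, hcw⟩ := h.exists_child (by rintro rfl; exact hwv (Anc.refl v))
  have hcx₂ := hcw.trans (hw x₂ (clade_subset_of_anc hc₂.2 hx₂))
  exact hne ((hc.eq_of_anc hc₁ (hcw.trans hwx₁) hx₁.2).symm.trans
    (hc.eq_of_anc hc₂ hcx₂ hx₂.2))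

theorem ncard_clade_add_ncard_clade_le {c₁ c₂ : V} (h₁ : IsChild T c₁ w)
    (h₂ : IsChild T c₂ w) (hne : c₁ ≠ c₂) :
    (clade T c₁).ncard + (clade T c₂).ncard ≤ (clade T w).ncard := by
  rw [← Set.ncard_union_eq
    (Set.disjoint_left.mpr fun _ hx₁ hx₂ => hne (h₁.eq_of_anc h₂ hx₁.2 hx₂.2))]
  exact Set.ncard_le_ncard
    (Set.union_subset (clade_subset_of_anc h₁.2) (clade_subset_of_anc h₂.2))

theorem card_biUnion_childSet (W : Finset V) :
    #(W.biUnion fun v => (childSet T v).toFinset) = ∑ v ∈ W, (childSet T v).ncard := by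
  rw [card_biUnion]
  · exact sum_congr rfl fun v _ => (Set.ncard_eq_toFinset_card' _).symm
  · intro v _ v' _ hne
    refine Finset.disjoint_left.mpr fun c hc hc' => hne ?_
    rw [Set.mem_toFinset] at hc hc'
    exact IsChild.parent_unique hc hc'

/-- The children of the nodes of `W` are pairwise distinct and avoid a shallowest node of `B`. -/
theorem two_mul_card_add_one_le {W B : Finset V} (hB : B.Nonempty) (hWB : W ⊆ B)
    (hchild : ∀ v ∈ W, ∀ c, IsChild T c v → c ∈ B)
    (htwo : ∀ v ∈ W, 2 ≤ (childSet T v).ncard) : 2 * #W + 1 ≤ #B := by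
  obtain ⟨r, hr, hmin⟩ := B.exists_min_image (T.adj.dist T.root ·) hB
  have hsub : W.biUnion (fun v => (childSet T v).toFinset) ⊆ B.erase r := by
    intro c hc
    obtain ⟨v, hv, hcv⟩ := mem_biUnion.mp hc
    rw [Set.mem_toFinset] at hcv
    refine mem_erase.mpr ⟨?_, hchild v hv c hcv⟩
    rintro rfl
    have := hmin v (hWB hv)
    have := hcv.depth_eq
    omega
  have hcard := card_le_card hsub
  rw [card_biUnion_childSet, card_erase_of_mem hr] at hcard
  have hsum : 2 * #W ≤ ∑ v ∈ W, (childSet T v).ncard := by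
    rw [mul_comm, ← smul_eq_mul, ← sum_const]
    exact sum_le_sum htwo
  have := hB.card_pos
  omega

theorem card_descendants (w : V) :
    #{v | Anc T w v} = ∑ v ∈ {v | Anc T w v}, (childSet T v).ncard + 1 := by
  have hchildren : ({v | Anc T w v} : Finset V).biUnion (fun v => (childSet T v).toFinset) =
      ({v | Anc T w v} : Finset V).erase w := by
    ext c
    simp only [mem_biUnion, mem_filter, mem_univ, true_and, Set.mem_toFinset, mem_erase]
    constructor
    · rintro ⟨v, hv, hcv⟩
      refine ⟨?_, hv.trans hcv.2⟩
      rintro rfl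
      have := hv.depth_le
      have := hcv.depth_eq
      omega
    · rintro ⟨hne, hc⟩
      have hroot : c ≠ T.root := by
        rintro rfl
        exact hne (hc.antisymm (anc_root w)).symm
      obtain ⟨p, hp⟩ := exists_isChild_of_ne_root hroot
      refine ⟨p, ?_, hp⟩
      rcases hc.total hp.2 with h | h
      · exact h
      · have : T.adj.dist T.root w ≠ T.adj.dist T.root c := fun hd =>
          hne (hc.eq_of_depth_le hd.ge).symm
        have := hc.depth_le
        have := hp.depth_eq
        rw [h.eq_of_depth_le (by omega)]
        exact Anc.refl w
  rw [← card_biUnion_childSet, hchildren, card_erase_of_mem (by simp [Anc.refl]),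
    Nat.sub_add_cancel (card_pos.mpr ⟨w, by simp [Anc.refl]⟩)]

theorem IsSpeciesTree.ncard_clade (hT : IsSpeciesTree T) (w : V) :
    (clade T w).ncard = #{u | Anc T w u ∧ ¬ IsLeaf T u} + 1 := by
  have hchildren : ∀ v, (childSet T v).ncard = if IsLeaf T v then 0 else 2 := fun v => by
    split_ifs with hl
    · rw [show childSet T v = ∅ from Set.eq_empty_of_forall_notMem hl, Set.ncard_empty]
    · exact hT v hl
  have hdesc := card_descendants (T := T) w
  simp only [hchildren, sum_ite, sum_const_zero, sum_const, smul_eq_mul, filter_filter,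
    zero_add] at hdesc
  have hsplit := card_filter_add_card_filter_not (s := ({u | Anc T w u} : Finset V)) (IsLeaf T)
  rw [filter_filter, filter_filter] at hsplit
  have hclade : (clade T w).ncard = #{u | Anc T w u ∧ IsLeaf T u} := by
    rw [Set.ncard_eq_toFinset_card', clade, Set.toFinset_ofPred]
    simp only [and_comm]
  omega

theorem IsSpeciesTree.card_internal_strictly_below_add_two (hT : IsSpeciesTree T)
    (hw : ¬ IsLeaf T w) :
    #{u | ¬ IsLeaf T u ∧ (Anc T w u ∧ w ≠ u)} + 2 = (clade T w).ncard := by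
  have hstrict : ({u | ¬ IsLeaf T u ∧ (Anc T w u ∧ w ≠ u)} : Finset V) =
      ({u | Anc T w u ∧ ¬ IsLeaf T u} : Finset V).erase w := by
    ext u
    simp only [mem_filter, mem_univ, true_and, mem_erase]
    tauto
  have hw' : w ∈ ({u | Anc T w u ∧ ¬ IsLeaf T u} : Finset V) := by simp [Anc.refl, hw]
  rw [hstrict, card_erase_of_mem hw', hT.ncard_clade w]
  have := card_pos.mpr ⟨w, hw'⟩
  omega

theorem IsSpeciesTree.numLeaves_eq (hT : IsSpeciesTree T) :
    numLeaves T = #{u | ¬ IsLeaf T u} + 1 := by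
  have := hT.ncard_clade T.root
  simp only [anc_root, true_and] at this
  rw [← this, numLeaves, clade]
  simp only [anc_root, and_true]

end Counting

namespace Recon

open Finset

variable (𝒢 : Recon Γ VG₁ VS S)

theorem isLeaf_geneLeaf (g : Γ) : IsLeaf 𝒢.tree (𝒢.geneLeaf g) :=
  (𝒢.geneLeaf_range _).mpr ⟨g, rfl⟩

theorem gclade_geneLeaf (g : Γ) : gclade 𝒢 (𝒢.geneLeaf g) = {g} := by
  ext g'
  refine ⟨fun h => 𝒢.geneLeaf_inj ((𝒢.isLeaf_geneLeaf g).eq_of_anc h).symm, ?_⟩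
  rintro rfl
  exact Anc.refl _

theorem image_gclade (v : VG₁) : 𝒢.geneLeaf '' gclade 𝒢 v = clade 𝒢.tree v := by
  ext x
  constructor
  · rintro ⟨g, hg, rfl⟩
    exact ⟨𝒢.isLeaf_geneLeaf g, hg⟩
  · rintro ⟨hx, hvx⟩
    obtain ⟨g, rfl⟩ := (𝒢.geneLeaf_range x).mp hx
    exact ⟨g, hvx, rfl⟩

theorem gclade_nonempty (v : VG₁) : (gclade 𝒢 v).Nonempty :=
  Set.image_nonempty.mp (𝒢.image_gclade v ▸ clade_nonempty 𝒢.tree v)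

/-- The counted nodes together with the leaves of the genes in `Γ'` form a forest in which every
counted node has at least two children. -/
theorem card_internal_add_one_le {Γ' : Set Γ} (hΓ' : Γ'.Nonempty) :
    #{v | ¬ IsLeaf 𝒢.tree v ∧ gclade 𝒢 v ⊆ Γ'} + 1 ≤ Γ'.ncard := by
  have : Finite Γ := Finite.of_injective _ 𝒢.geneLeaf_inj
  set W : Finset VG₁ := {v | ¬ IsLeaf 𝒢.tree v ∧ gclade 𝒢 v ⊆ Γ'}
  set L : Finset VG₁ := (Set.toFinite Γ').toFinset.image 𝒢.geneLeaf
  have hW : ∀ v, v ∈ W ↔ ¬ IsLeaf 𝒢.tree v ∧ gclade 𝒢 v ⊆ Γ' := by simp [W]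
  have hL : ∀ g ∈ Γ', 𝒢.geneLeaf g ∈ L := fun g hg =>
    mem_image_of_mem _ ((Set.toFinite Γ').mem_toFinset.mpr hg)
  have hchild : ∀ v ∈ W, ∀ c, IsChild 𝒢.tree c v → c ∈ W ∪ L := by
    intro v hv c hc
    rw [hW] at hv
    by_cases hl : IsLeaf 𝒢.tree c
    · obtain ⟨g, rfl⟩ := (𝒢.geneLeaf_range c).mp hl
      exact mem_union_right _ (hL g (hv.2 hc.2))
    · exact mem_union_left _ ((hW c).mpr ⟨hl, fun g hg => hv.2 (hc.2.trans hg)⟩)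
  obtain ⟨g, hg⟩ := hΓ'
  have hforest : 2 * #W + 1 ≤ #(W ∪ L) :=
    two_mul_card_add_one_le ⟨_, mem_union_right _ (hL g hg)⟩ subset_union_left hchild
      fun v hv => 𝒢.internal_children v ((hW v).mp hv).1
  have := card_union_le W L
  have : #L ≤ Γ'.ncard := card_image_le.trans (Set.ncard_eq_toFinset_card _).ge
  omega

end Recon

theorem IsLcaMap.map_geneLeaf {𝒢₁ : Recon Γ VG₁ VS S} {𝒢₂ : Recon Γ VG₂ VS S}
    {m : VG₁ → VG₂} (hm : IsLcaMap 𝒢₁ 𝒢₂ m) (g : Γ) : m (𝒢₁.geneLeaf g) = 𝒢₂.geneLeaf g := by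
  have h := hm (𝒢₁.geneLeaf g)
  rw [Recon.gclade_geneLeaf, Set.image_singleton] at h
  exact h.unique ⟨fun x hx => hx ▸ Anc.refl _, fun w hw => hw _ rfl⟩

section Bounds

open Finset

theorem dLbl_add_one_le {𝒢₁ : Recon Γ VG₁ VS S} {𝒢₂ : Recon Γ VG₂ VS S}
    {m : VG₁ → VG₂} (hm : IsLcaMap 𝒢₁ 𝒢₂ m) : dLbl 𝒢₁ 𝒢₂ m + 1 ≤ Nat.card Γ := by
  have hsub : {v | 𝒢₁.lbl v ≠ 𝒢₂.lbl (m v)} ⊆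
      ↑({v | ¬ IsLeaf 𝒢₁.tree v ∧ gclade 𝒢₁ v ⊆ Set.univ} : Finset VG₁) := by
    intro v hv
    simp only [coe_filter, mem_univ, true_and, Set.subset_univ, and_true, Set.mem_ofPred_eq]
    intro hl
    obtain ⟨g, rfl⟩ := (𝒢₁.geneLeaf_range v).mp hl
    rw [Set.mem_ofPred_eq, hm.map_geneLeaf, 𝒢₁.leaf_lbl _ hl,
      𝒢₂.leaf_lbl _ (𝒢₂.isLeaf_geneLeaf g)] at hv
    exact hv rfl
  obtain ⟨g, -⟩ := 𝒢₁.gclade_nonempty 𝒢₁.tree.root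
  have hforest := 𝒢₁.card_internal_add_one_le ⟨g, Set.mem_univ g⟩
  rw [Set.ncard_univ] at hforest
  have := Set.ncard_le_ncard hsub
  rw [Set.ncard_coe_finset] at this
  unfold dLbl
  omega

theorem card_internal_genes_below_add_one_le (𝒢 : Recon {s : VS // IsLeaf S s} VG₁ VS S)
    (c : VS) :
    #{v | ¬ IsLeaf 𝒢.tree v ∧ gclade 𝒢 v ⊆ {g | Anc S c g.1}} + 1 ≤
      (clade S c).ncard := by
  have hgenes : Subtype.val '' {g : {s : VS // IsLeaf S s} | Anc S c g.1} = clade S c := by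
    ext x
    exact ⟨fun ⟨g, hg, hgx⟩ => hgx ▸ ⟨g.2, hg⟩,
      fun hx => ⟨⟨x, hx.1⟩, hx.2, rfl⟩⟩
  obtain ⟨x, hx⟩ := clade_nonempty S c
  rw [← hgenes, Set.ncard_image_of_injective _ Subtype.val_injective]
  exact 𝒢.card_internal_add_one_le ⟨⟨x, hx.1⟩, hx.2⟩

/-- Nodes of `𝒢` whose clade sits strictly below `w` have their clade below one of the two
children of `w`, and the forest bound applies on each side. -/
theorem card_internal_strictly_below_le (hS : IsSpeciesTree S)
    (𝒢 : Recon {s : VS // IsLeaf S s} VG₁ VS S) {x : VG₁ → VS}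
    (hx : ∀ v, ∀ g ∈ gclade 𝒢 v, Anc S (x v) g.1) (w : VS) :
    #{v | ¬ IsLeaf 𝒢.tree v ∧ (Anc S w (x v) ∧ w ≠ x v)} ≤
      #{u | ¬ IsLeaf S u ∧ (Anc S w u ∧ w ≠ u)} := by
  by_cases hw : IsLeaf S w
  · rw [card_eq_zero.mpr (filter_eq_empty_iff.mpr fun v _ h => h.2.2 (hw.eq_of_anc h.2.1))]
    exact Nat.zero_le _
  obtain ⟨c₁, c₂, hne, hcs⟩ := Set.ncard_eq_two.mp (hS w hw)
  have hchildren : ∀ c, IsChild S c w ↔ c = c₁ ∨ c = c₂ := fun c => Set.ext_iff.mp hcs c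
  have hsplit : ({v | ¬ IsLeaf 𝒢.tree v ∧ (Anc S w (x v) ∧ w ≠ x v)} : Finset VG₁) ⊆
      ({v | ¬ IsLeaf 𝒢.tree v ∧ gclade 𝒢 v ⊆ {g | Anc S c₁ g.1}} : Finset VG₁) ∪
      ({v | ¬ IsLeaf 𝒢.tree v ∧ gclade 𝒢 v ⊆ {g | Anc S c₂ g.1}} : Finset VG₁) := by
    intro v hv
    simp only [mem_filter, mem_univ, true_and, mem_union] at hv ⊢
    obtain ⟨c, hc, hcx⟩ := hv.2.1.exists_child hv.2.2
    rcases (hchildren c).mp hc with rfl | rfl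
    · exact Or.inl ⟨hv.1, fun g hg => hcx.trans (hx v g hg)⟩
    · exact Or.inr ⟨hv.1, fun g hg => hcx.trans (hx v g hg)⟩
  have := ncard_clade_add_ncard_clade_le ((hchildren c₁).mpr (.inl rfl))
    ((hchildren c₂).mpr (.inr rfl)) hne
  have := hS.card_internal_strictly_below_add_two hw
  have := card_internal_genes_below_add_one_le 𝒢 c₁
  have := card_internal_genes_below_add_one_le 𝒢 c₂
  have := (card_le_card hsplit).trans (card_union_le _ _)
  omega

theorem OneGenePerSpecies.anc_of_isLCA {𝒢 : Recon {s : VS // IsLeaf S s} VG₁ VS S}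
    (h : OneGenePerSpecies 𝒢) {X : Set {s : VS // IsLeaf S s}} {x : VS}
    (hx : IsLCA S (Subtype.val '' X) x) {a : VG₁}
    (ha : ∀ g ∈ X, Anc 𝒢.tree a (𝒢.geneLeaf g)) :
    Anc S (𝒢.μ a) x :=
  hx.2 _ (by rintro _ ⟨g, hg, rfl⟩; rw [← h g]; exact 𝒢.time_consistent _ _ (ha g hg))

theorem dPath_le_Hsum (hS : IsSpeciesTree S) {𝒢₁ : Recon {s : VS // IsLeaf S s} VG₁ VS S}
    {𝒢₂ : Recon {s : VS // IsLeaf S s} VG₂ VS S} (h₁ : OneGenePerSpecies 𝒢₁)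
    (h₂ : OneGenePerSpecies 𝒢₂) {m : VG₁ → VG₂} (hm : IsLcaMap 𝒢₁ 𝒢₂ m) :
    dPath 𝒢₁ 𝒢₂ m ≤ Hsum S := by
  choose x hx using fun v => exists_isLCA (T := S) ((𝒢₁.gclade_nonempty v).image Subtype.val)
  have hdist : ∀ v, S.adj.dist (𝒢₁.μ v) (𝒢₂.μ (m v)) ≤
      if IsLeaf 𝒢₁.tree v then 0 else S.adj.dist S.root (x v) := by
    intro v
    split_ifs with hl
    · obtain ⟨g, rfl⟩ := (𝒢₁.geneLeaf_range v).mp hl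
      rw [hm.map_geneLeaf, h₁, h₂, dist_self]
    · exact dist_le_depth_of_anc (h₁.anc_of_isLCA (hx v) fun g hg => hg)
        (h₂.anc_of_isLCA (hx v) fun g hg => (hm v).1 _ ⟨g, hg, rfl⟩)
  have hx' : ∀ v, ∀ g ∈ gclade 𝒢₁ v, Anc S (x v) g.1 := fun v g hg =>
    (hx v).1 _ ⟨g, hg, rfl⟩
  calc dPath 𝒢₁ 𝒢₂ m
      ≤ ∑ v, if IsLeaf 𝒢₁.tree v then 0 else S.adj.dist S.root (x v) :=
        sum_le_sum fun v _ => hdist v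
    _ = ∑ w, #{v | ¬ IsLeaf 𝒢₁.tree v ∧ (Anc S w (x v) ∧ w ≠ x v)} := by
        rw [sum_ite, sum_const_zero, zero_add, sum_depth_eq_sum_card]
        simp only [filter_filter]
    _ ≤ ∑ w, #{u | ¬ IsLeaf S u ∧ (Anc S w u ∧ w ≠ u)} :=
        sum_le_sum fun w _ => card_internal_strictly_below_le hS 𝒢₁ hx' w
    _ = Hsum S := by
        have := sum_depth_eq_sum_card (T := S) {u | ¬ IsLeaf S u} id
        simp only [id, filter_filter] at this
        rw [Hsum, sum_ite, sum_const_zero, zero_add, this]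

end Bounds

section Extremal

open Finset

theorem Recon.isLcaMap_id {𝒢₁ 𝒢₂ : Recon Γ VG₁ VS S} (htree : 𝒢₁.tree = 𝒢₂.tree)
    (hleaf : 𝒢₁.geneLeaf = 𝒢₂.geneLeaf) : IsLcaMap 𝒢₁ 𝒢₂ id := by
  intro v
  have : gclade 𝒢₁ v = gclade 𝒢₂ v := by simp only [gclade, htree, hleaf]
  rw [id, this, 𝒢₂.image_gclade]
  exact isLCA_clade 𝒢₂.internal_children v

noncomputable def speciationRecon (hS : IsSpeciesTree S) :
    Recon {s : VS // IsLeaf S s} VS VS S where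
  tree := S
  geneLeaf := Subtype.val
  geneLeaf_inj := Subtype.val_injective
  geneLeaf_range v := ⟨fun h => ⟨⟨v, h⟩, rfl⟩, by rintro ⟨g, rfl⟩; exact g.2⟩
  μ := id
  lbl v := if IsLeaf S v then .extant else .spec
  internal_children v hv := (hS v hv).ge
  leaf_species _ h := h
  leaf_lbl _ h := if_pos h
  internal_lbl _ h := .inr (if_neg h)
  time_consistent _ _ h := h
  spec_two_children v h := by
    by_cases hl : IsLeaf S v
    · simp [hl] at h
    · exact ⟨hl, hS v hl⟩
  spec_separates _ _ v₁ v₂ h₁ h₂ hne :=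
    ⟨v₁, v₂, h₁, h₂, hne, .inl ⟨Anc.refl v₁, Anc.refl v₂⟩⟩

noncomputable def rootDuplicationRecon (hS : IsSpeciesTree S) :
    Recon {s : VS // IsLeaf S s} VS VS S where
  tree := S
  geneLeaf := Subtype.val
  geneLeaf_inj := Subtype.val_injective
  geneLeaf_range v := ⟨fun h => ⟨⟨v, h⟩, rfl⟩, by rintro ⟨g, rfl⟩; exact g.2⟩
  μ v := if IsLeaf S v then v else S.root
  lbl v := if IsLeaf S v then .extant else .dup
  internal_children v hv := (hS v hv).ge
  leaf_species _ h := by rwa [if_pos h]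
  leaf_lbl _ h := if_pos h
  internal_lbl _ h := .inl (if_neg h)
  time_consistent a b h := by
    by_cases hl : IsLeaf S a
    · rw [← hl.eq_of_anc h]; exact Anc.refl _
    · rw [if_neg hl]; exact anc_root _
  spec_two_children v h := by by_cases hl : IsLeaf S v <;> simp [hl] at h
  spec_separates v h := by by_cases hl : IsLeaf S v <;> simp [hl] at h

theorem dPath_speciationRecon (hS : IsSpeciesTree S) :
    dPath (speciationRecon hS) (rootDuplicationRecon hS) id = Hsum S := by
  refine sum_congr rfl fun v _ => ?_
  by_cases hl : IsLeaf S v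
  · simp [speciationRecon, rootDuplicationRecon, hl]
  · simp [speciationRecon, rootDuplicationRecon, hl, dist_comm]

theorem dPath_rootDuplicationRecon (hS : IsSpeciesTree S) :
    dPath (rootDuplicationRecon hS) (speciationRecon hS) id = Hsum S := by
  rw [← dPath_speciationRecon hS]
  exact sum_congr rfl fun v _ => dist_comm

theorem dLbl_speciationRecon (hS : IsSpeciesTree S) :
    dLbl (speciationRecon hS) (rootDuplicationRecon hS) id = #{u | ¬ IsLeaf S u} := by
  rw [dLbl, ← Set.ncard_coe_finset, coe_filter]
  congr 1
  ext v
  by_cases hl : IsLeaf S v <;> simp [speciationRecon, rootDuplicationRecon, hl]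

theorem dLbl_rootDuplicationRecon (hS : IsSpeciesTree S) :
    dLbl (rootDuplicationRecon hS) (speciationRecon hS) id = #{u | ¬ IsLeaf S u} := by
  rw [← dLbl_speciationRecon hS, dLbl, dLbl]
  exact congrArg _ (Set.ext fun _ => ne_comm)

end Extremal

theorem stmt12_general (hS : IsSpeciesTree S) (n : ℕ) (hn : numLeaves S = n)
    (α : ℝ) (hα₀ : 0 ≤ α) (hα₁ : α ≤ 1) :
    (∀ (VG₁ VG₂ : Type) [Fintype VG₁] [Fintype VG₂]
      (𝒢₁ : Recon {s : VS // IsLeaf S s} VG₁ VS S)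
      (𝒢₂ : Recon {s : VS // IsLeaf S s} VG₂ VS S),
      OneGenePerSpecies 𝒢₁ → OneGenePerSpecies 𝒢₂ →
      ∀ (m₁₂ : VG₁ → VG₂) (m₂₁ : VG₂ → VG₁),
        IsLcaMap 𝒢₁ 𝒢₂ m₁₂ → IsLcaMap 𝒢₂ 𝒢₁ m₂₁ →
        PLR α 𝒢₁ 𝒢₂ m₁₂ m₂₁ ≤ 2 * α * (Hsum S : ℝ) + (1 - α) * (2 * (n : ℝ) - 2)) ∧
    (∃ (𝒢₁ 𝒢₂ : Recon {s : VS // IsLeaf S s} VS VS S) (m₁₂ m₂₁ : VS → VS),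
      OneGenePerSpecies 𝒢₁ ∧ OneGenePerSpecies 𝒢₂ ∧
      IsLcaMap 𝒢₁ 𝒢₂ m₁₂ ∧ IsLcaMap 𝒢₂ 𝒢₁ m₂₁ ∧
      PLR α 𝒢₁ 𝒢₂ m₁₂ m₂₁ = 2 * α * (Hsum S : ℝ) + (1 - α) * (2 * (n : ℝ) - 2)) := by
  refine ⟨fun _ _ _ _ 𝒢₁ 𝒢₂ h₁ h₂ m₁₂ m₂₁ hm₁₂ hm₂₁ => ?_, ?_⟩
  · have hgenes : Nat.card {s : VS // IsLeaf S s} = n := (Nat.card_coe_set_eq _).trans hn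
    have hp₁₂ : (dPath 𝒢₁ 𝒢₂ m₁₂ : ℝ) ≤ Hsum S := mod_cast dPath_le_Hsum hS h₁ h₂ hm₁₂
    have hp₂₁ : (dPath 𝒢₂ 𝒢₁ m₂₁ : ℝ) ≤ Hsum S := mod_cast dPath_le_Hsum hS h₂ h₁ hm₂₁
    have hl₁₂ : (dLbl 𝒢₁ 𝒢₂ m₁₂ : ℝ) + 1 ≤ n := mod_cast hgenes ▸ dLbl_add_one_le hm₁₂
    have hl₂₁ : (dLbl 𝒢₂ 𝒢₁ m₂₁ : ℝ) + 1 ≤ n := mod_cast hgenes ▸ dLbl_add_one_le hm₂₁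
    rw [PLR, dAsym, dAsym]
    linarith [mul_le_mul_of_nonneg_left (add_le_add hp₁₂ hp₂₁) hα₀,
      mul_le_mul_of_nonneg_left (add_le_add hl₁₂ hl₂₁) (sub_nonneg.mpr hα₁)]
  · have hleaves : (n : ℝ) = ({u | ¬ IsLeaf S u} : Finset VS).card + 1 := by
      rw [← hn, hS.numLeaves_eq]
      push_cast
      rfl
    refine ⟨speciationRecon hS, rootDuplicationRecon hS, id, id, fun _ => rfl,
      fun g => if_pos g.2, Recon.isLcaMap_id rfl rfl, Recon.isLcaMap_id rfl rfl, ?_⟩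
    rw [PLR, dAsym, dAsym, dPath_speciationRecon, dPath_rootDuplicationRecon,
      dLbl_speciationRecon, dLbl_rootDuplicationRecon, hleaves]
    ring

/-- for a species tree `S` with `n ≥ 2` leaves,
`diam(PLR, S) = 2α·H(S) + (1−α)(2n−2)`: it is an upper bound over `𝖦^S`, and it is attained. -/
theorem stmt12 (hS : IsSpeciesTree S) (n : ℕ) (hn : numLeaves S = n) (h2 : 2 ≤ n)
    (α : ℝ) (hα₀ : 0 ≤ α) (hα₁ : α ≤ 1) :
    (∀ (VG₁ VG₂ : Type) [Fintype VG₁] [Fintype VG₂]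
      (𝒢₁ : Recon {s : VS // IsLeaf S s} VG₁ VS S)
      (𝒢₂ : Recon {s : VS // IsLeaf S s} VG₂ VS S),
      OneGenePerSpecies 𝒢₁ → OneGenePerSpecies 𝒢₂ →
      ∀ (m₁₂ : VG₁ → VG₂) (m₂₁ : VG₂ → VG₁),
        IsLcaMap 𝒢₁ 𝒢₂ m₁₂ → IsLcaMap 𝒢₂ 𝒢₁ m₂₁ →
        PLR α 𝒢₁ 𝒢₂ m₁₂ m₂₁ ≤ 2 * α * (Hsum S : ℝ) + (1 - α) * (2 * (n : ℝ) - 2)) ∧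
    (∃ (𝒢₁ 𝒢₂ : Recon {s : VS // IsLeaf S s} VS VS S) (m₁₂ m₂₁ : VS → VS),
      OneGenePerSpecies 𝒢₁ ∧ OneGenePerSpecies 𝒢₂ ∧
      IsLcaMap 𝒢₁ 𝒢₂ m₁₂ ∧ IsLcaMap 𝒢₂ 𝒢₁ m₂₁ ∧
      PLR α 𝒢₁ 𝒢₂ m₁₂ m₂₁ = 2 * α * (Hsum S : ℝ) + (1 - α) * (2 * (n : ℝ) - 2)) :=
  stmt12_general hS n hn α hα₀ hα₁
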